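/- arXiv:1104.4132 — 3 statements merged into one kernel-verified Lean document; each statement's English description precedes it below -/
import Mathlib

section
/- On complex projective space ℂP^m (m = k+l+1 ≥ 2) with the Fubini–Study metric g, the function τ([x,y]) = |y|²/(|x|² + |y|²), where x ∈ ℂ^{k+1}, y ∈ ℂ^{l+1}, satisfies g(grad τ, grad τ) = 4(1−τ)τ. In particular τ has geodesic gradient, and its critical set is the disjoint union of the linear subvarieties ℂP^k = {y = 0} and ℂP^l = {x = 0}. -/
open Manifold
noncomputable section

variable {EV : Type*} [NormedAddCommGroup EV] [NormedSpace ℝ EV]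
  {M : Type*} [TopologicalSpace M] [ChartedSpace EV M]
  [IsManifold 𝓘(ℝ, EV) (⊤ : ℕ∞) M]

/-- The (manifold) differential of a real-valued function, applied to a tangent
vector (tangent spaces being canonically identified with the model space `EV`). -/
def mdiff (f : M → ℝ) (x : M) (w : EV) : ℝ :=
  mfderiv 𝓘(ℝ, EV) 𝓘(ℝ, ℝ) f x w

/-- A Riemannian metric together with its gradient operator and Levi-Civita
connection on a smooth manifold `M` modeled on `EV`. -/
structure RiemannData (EV : Type*) [NormedAddCommGroup EV] [NormedSpace ℝ EV]
    (M : Type*) [TopologicalSpace M] [ChartedSpace EV M]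
    [IsManifold 𝓘(ℝ, EV) (⊤ : ℕ∞) M] where
  /-- the Riemannian metric -/
  g : M → EV →L[ℝ] EV →L[ℝ] ℝ
  g_symm : ∀ x a b, g x a b = g x b a
  g_posdef : ∀ (x : M) (a : EV), a ≠ 0 → 0 < g x a a
  g_smooth : ∀ X Y : M → EV, ContMDiff 𝓘(ℝ, EV) 𝓘(ℝ, EV) (⊤ : ℕ∞) X →
    ContMDiff 𝓘(ℝ, EV) 𝓘(ℝ, EV) (⊤ : ℕ∞) Y →
    ContMDiff 𝓘(ℝ, EV) 𝓘(ℝ, ℝ) (⊤ : ℕ∞) (fun x => g x (X x) (Y x))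
  /-- the gradient of a function, characterized by the metric -/
  grad : (M → ℝ) → M → EV
  grad_spec : ∀ (f : M → ℝ), ContMDiff 𝓘(ℝ, EV) 𝓘(ℝ, ℝ) (⊤ : ℕ∞) f →
    ∀ (x : M) (w : EV), g x (grad f x) w = mdiff f x w
  /-- the Levi-Civita connection, acting on vector fields (written in the
  canonical identification of tangent spaces with `EV`) -/
  conn : (M → EV) → (M → EV) → (M → EV)
  conn_add : ∀ X Y Z, conn X (fun y => Y y + Z y) = fun y => conn X Y y + conn X Z y
  conn_tensorial : ∀ (h : M → ℝ) (X Y : M → EV) (x : M),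
    conn (fun y => h y • X y) Y x = h x • conn X Y x
  conn_leibniz : ∀ (h : M → ℝ) (X Y : M → EV) (x : M),
    ContMDiff 𝓘(ℝ, EV) 𝓘(ℝ, ℝ) (⊤ : ℕ∞) h →
    conn X (fun y => h y • Y y) x = (mdiff h x (X x)) • Y x + h x • conn X Y x
  conn_metric : ∀ (X Y Z : M → EV) (x : M),
    ContMDiff 𝓘(ℝ, EV) 𝓘(ℝ, EV) (⊤ : ℕ∞) Y → ContMDiff 𝓘(ℝ, EV) 𝓘(ℝ, EV) (⊤ : ℕ∞) Z →
    mdiff (fun y => g y (Y y) (Z y)) x (X x)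
      = g x (conn X Y x) (Z x) + g x (Y x) (conn X Z x)
  conn_torsionFree : ∀ (X Y : M → EV) (f : M → ℝ) (x : M),
    ContMDiff 𝓘(ℝ, EV) 𝓘(ℝ, EV) (⊤ : ℕ∞) X → ContMDiff 𝓘(ℝ, EV) 𝓘(ℝ, EV) (⊤ : ℕ∞) Y →
    ContMDiff 𝓘(ℝ, EV) 𝓘(ℝ, ℝ) (⊤ : ℕ∞) f →
    mdiff f x (conn X Y x - conn Y X x)
      = mdiff (fun y => mdiff f y (Y y)) x (X x)
        - mdiff (fun y => mdiff f y (X y)) x (Y x)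

/-! Lift to `ℂ^{k+1} × ℂ^{l+1}`: if `P` is the orthogonal projection onto `{x = 0}`, then `τ ∘ π`
is the Rayleigh quotient `z ↦ ‖P z‖² / ‖z‖²`. At a unit vector `z` its differential is
`Re ⟪v, ·⟫` with `v = 2 (P z - τ z)`, and `v ⊥ z`. Since `dπ` maps the horizontal space `z^⊥`
isometrically onto the tangent space, `grad τ = dπ v`, so
`|grad τ|² = ‖v‖² = 4 (‖P z‖² - τ²) = 4 (1 - τ) τ`. As `|grad τ|²` is a function of `τ`, its
differential is proportional to `dτ`; and `grad τ` vanishes exactly where `τ ∈ {0, 1}`, that is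
on `π {y = 0}` and `π {x = 0}`. -/

section Rayleigh

variable {𝕜 E : Type*} [RCLike 𝕜] [NormedAddCommGroup E] [InnerProductSpace 𝕜 E]

local notation "⟪" x ", " y "⟫" => inner 𝕜 x y

namespace ContinuousLinearMap

def rayleighGradient (T : E →L[𝕜] E) (z : E) : E :=
  (2 : 𝕜) • (T z - (T.rayleighQuotient z : 𝕜) • z)

variable {T : E →L[𝕜] E} {z : E}

theorem rayleighQuotient_of_norm_eq_one (hz : ‖z‖ = 1) :
    T.rayleighQuotient z = RCLike.re ⟪T z, z⟫ := by
  simp [rayleighQuotient, reApplyInnerSelf_apply, hz]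

theorem re_inner_rayleighGradient (w : E) :
    RCLike.re ⟪T.rayleighGradient z, w⟫
      = 2 * (RCLike.re ⟪T z, w⟫ - T.rayleighQuotient z * RCLike.re ⟪z, w⟫) := by
  rw [rayleighGradient, inner_smul_left, inner_sub_left, inner_smul_left, RCLike.conj_ofReal,
    map_ofNat, ← RCLike.ofReal_ofNat, RCLike.re_ofReal_mul, map_sub, RCLike.re_ofReal_mul]

theorem inner_rayleighGradient_eq_zero (hT : (T : E →ₗ[𝕜] E).IsSymmetric) (hz : ‖z‖ = 1) :
    ⟪z, T.rayleighGradient z⟫ = 0 := by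
  have hTz : ⟪z, T z⟫ = T.rayleighQuotient z := by
    rw [← inner_conj_symm, ← hT.coe_reApplyInnerSelf_apply, RCLike.conj_ofReal,
      reApplyInnerSelf_apply, rayleighQuotient_of_norm_eq_one hz]
  rw [rayleighGradient, inner_smul_right, inner_sub_right, inner_smul_right, hTz,
    inner_self_eq_norm_sq_to_K, hz]
  simp

theorem norm_rayleighGradient_sq (hT : (T : E →ₗ[𝕜] E).IsSymmetric) (hz : ‖z‖ = 1) :
    ‖T.rayleighGradient z‖ ^ 2 = 4 * (‖T z‖ ^ 2 - T.rayleighQuotient z ^ 2) := by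
  rw [← inner_self_eq_norm_sq (𝕜 := 𝕜), re_inner_rayleighGradient, inner_re_symm,
    re_inner_rayleighGradient, inner_self_eq_norm_sq, inner_re_symm (𝕜 := 𝕜) z,
    inner_rayleighGradient_eq_zero hT hz, map_zero, ← rayleighQuotient_of_norm_eq_one hz]
  ring

theorem hasFDerivAt_rayleighQuotient [NormedSpace ℝ E] [IsScalarTower ℝ 𝕜 E]
    (hT : (T : E →ₗ[𝕜] E).IsSymmetric) (hz : ‖z‖ = 1) :
    HasFDerivAt T.rayleighQuotient
      (RCLike.reCLM.comp ((innerSL 𝕜 (T.rayleighGradient z)).restrictScalars ℝ)) z := by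
  have hN := RCLike.reCLM.hasFDerivAt.comp z
    (((T.restrictScalars ℝ).hasFDerivAt).inner 𝕜 (hasFDerivAt_id z))
  have hD := RCLike.reCLM.hasFDerivAt.comp z ((hasFDerivAt_id z).inner 𝕜 (hasFDerivAt_id z))
  have hzz : RCLike.re ⟪z, z⟫ = 1 := by simp [hz]
  have hq : T.rayleighQuotient = fun u => RCLike.re ⟪T u, u⟫ * (RCLike.re ⟪u, u⟫)⁻¹ := by
    funext u; simp [rayleighQuotient, reApplyInnerSelf_apply, div_eq_mul_inv]
  have hinv := (hasFDerivAt_inv (x := RCLike.re ⟪z, z⟫) (by rw [hzz]; exact one_ne_zero)).comp z hD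
  rw [hq]
  refine (hN.mul hinv).congr_fderiv ?_
  ext w
  have hTw : ⟪T w, z⟫ = ⟪w, T z⟫ := hT w z
  simp only [coe_comp, Function.comp_apply, add_apply, smul_apply, fderivInnerCLM_apply,
    coe_restrictScalars', id_eq, RCLike.reCLM_apply, prod_apply, coe_id', smul_eq_mul, map_add,
    hzz, toSpanSingleton_apply, innerSL_apply_apply, re_inner_rayleighGradient]
  rw [rayleighQuotient_of_norm_eq_one hz, hTw, inner_re_symm (𝕜 := 𝕜) w (T z),
    inner_re_symm (𝕜 := 𝕜) w z]
  ring

end ContinuousLinearMap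

namespace Submodule

variable (K : Submodule 𝕜 E) [K.HasOrthogonalProjection]

theorem rayleighQuotient_starProjection (z : E) :
    K.starProjection.rayleighQuotient z = ‖K.starProjection z‖ ^ 2 / ‖z‖ ^ 2 := by
  rw [ContinuousLinearMap.rayleighQuotient, ContinuousLinearMap.reApplyInnerSelf_apply,
    re_inner_starProjection_eq_normSq]
  rfl

theorem rayleighQuotient_starProjection_eq_zero_iff (z : E) :
    K.starProjection.rayleighQuotient z = 0 ↔ K.starProjection z = 0 := by
  rw [rayleighQuotient_starProjection, div_eq_zero_iff]
  simp only [ne_eq, OfNat.ofNat_ne_zero, not_false_eq_true, pow_eq_zero_iff, norm_eq_zero]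
  exact or_iff_left_of_imp fun hz => by rw [hz, map_zero]

theorem rayleighQuotient_starProjection_eq_one_iff {z : E} (hz : z ≠ 0) :
    K.starProjection.rayleighQuotient z = 1 ↔ z ∈ K := by
  rw [rayleighQuotient_starProjection, div_eq_one_iff_eq (by positivity),
    K.mem_iff_norm_starProjection]
  exact sq_eq_sq₀ (norm_nonneg _) (norm_nonneg _)

theorem norm_rayleighGradient_starProjection_sq {z : E} (hz : ‖z‖ = 1) :
    ‖K.starProjection.rayleighGradient z‖ ^ 2
      = 4 * (1 - K.starProjection.rayleighQuotient z) * K.starProjection.rayleighQuotient z := by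
  rw [ContinuousLinearMap.norm_rayleighGradient_sq K.starProjection_isSymmetric hz,
    rayleighQuotient_starProjection, hz]
  ring

end Submodule
end Rayleigh

section Blocks

variable (𝕜 : Type*) [RCLike 𝕜] (ι κ : Type*) [Fintype ι] [Fintype κ]

def inlVanishing : Submodule 𝕜 (EuclideanSpace 𝕜 (ι ⊕ κ)) where
  carrier := {z | ∀ i, z (Sum.inl i) = 0}
  add_mem' ha hb i := by simp [ha i, hb i]
  zero_mem' _ := rfl
  smul_mem' c z hz i := by simp [hz i]

variable {𝕜 ι κ}

theorem EuclideanSpace.norm_sq_eq_sum_inl_add_sum_inr (z : EuclideanSpace 𝕜 (ι ⊕ κ)) :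
    ‖z‖ ^ 2 = ∑ i, ‖z (Sum.inl i)‖ ^ 2 + ∑ j, ‖z (Sum.inr j)‖ ^ 2 := by
  rw [EuclideanSpace.norm_sq_eq, Fintype.sum_sum_type]

theorem starProjection_inlVanishing_apply (z : EuclideanSpace 𝕜 (ι ⊕ κ)) :
    (inlVanishing 𝕜 ι κ).starProjection z
      = WithLp.toLp 2 (Sum.elim (0 : ι → 𝕜) fun j => z (Sum.inr j)) := by
  refine Submodule.eq_starProjection_of_mem_of_inner_eq_zero
    (K := inlVanishing 𝕜 ι κ) (v := WithLp.toLp 2 (Sum.elim (0 : ι → 𝕜) fun j => z (Sum.inr j)))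
    (fun _ => rfl) fun w hw => ?_
  rw [PiLp.inner_apply, Fintype.sum_sum_type]
  simp [show ∀ i, w (Sum.inl i) = 0 from hw]

theorem norm_starProjection_inlVanishing_sq (z : EuclideanSpace 𝕜 (ι ⊕ κ)) :
    ‖(inlVanishing 𝕜 ι κ).starProjection z‖ ^ 2 = ∑ j, ‖z (Sum.inr j)‖ ^ 2 := by
  simp [starProjection_inlVanishing_apply, EuclideanSpace.norm_sq_eq_sum_inl_add_sum_inr]

theorem starProjection_inlVanishing_eq_zero_iff {z : EuclideanSpace 𝕜 (ι ⊕ κ)} :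
    (inlVanishing 𝕜 ι κ).starProjection z = 0 ↔ ∀ j, z (Sum.inr j) = 0 := by
  rw [starProjection_inlVanishing_apply]
  simp [funext_iff, Sum.forall]

theorem rayleighQuotient_starProjection_inlVanishing (z : EuclideanSpace 𝕜 (ι ⊕ κ)) :
    (inlVanishing 𝕜 ι κ).starProjection.rayleighQuotient z
      = (∑ j, ‖z (Sum.inr j)‖ ^ 2) / (∑ i, ‖z (Sum.inl i)‖ ^ 2 + ∑ j, ‖z (Sum.inr j)‖ ^ 2) := by
  rw [Submodule.rayleighQuotient_starProjection, norm_starProjection_inlVanishing_sq,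
    EuclideanSpace.norm_sq_eq_sum_inl_add_sum_inr]

end Blocks

theorem exists_inner_eq_zero_apply_eq {F V : Type*} [NormedAddCommGroup F]
    [InnerProductSpace ℂ F] [Module ℝ F] [IsScalarTower ℝ ℂ F] [FiniteDimensional ℂ F]
    [AddCommGroup V] [Module ℝ V] [FiniteDimensional ℝ V]
    {z : F} (hz : z ≠ 0) (L : F →ₗ[ℝ] V) (hL : ∀ w, inner ℂ z w = 0 → L w = 0 → w = 0)
    (hdim : Module.finrank ℝ V + 2 = 2 * Module.finrank ℂ F) (u : V) :
    ∃ w, inner ℂ z w = 0 ∧ L w = u := by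
  have : FiniteDimensional ℝ (ℂ ∙ z)ᗮ := Module.Finite.trans ℂ _
  let LH : (ℂ ∙ z)ᗮ →ₗ[ℝ] V := L.comp (((ℂ ∙ z)ᗮ.subtype).restrictScalars ℝ)
  have hrank : Module.finrank ℝ (ℂ ∙ z)ᗮ = Module.finrank ℝ V := by
    have := (ℂ ∙ z).finrank_add_finrank_orthogonal
    rw [finrank_span_singleton hz] at this
    rw [← Module.finrank_mul_finrank ℝ ℂ, Complex.finrank_real_complex]
    omega
  have hinj : Function.Injective LH := by
    rw [← LinearMap.ker_eq_bot, LinearMap.ker_eq_bot']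
    intro w hw
    exact Subtype.ext (hL w (Submodule.mem_orthogonal_singleton_iff_inner_right.mp w.2) hw)
  obtain ⟨w, hw⟩ := (LinearMap.injective_iff_surjective_of_finrank_eq_finrank hrank).mp hinj u
  exact ⟨w, Submodule.mem_orthogonal_singleton_iff_inner_right.mp w.2, hw⟩

theorem image_setOf_and_eq_preimage_singleton {α β γ : Type*} {π : α → β} {f : β → γ}
    {P Q : α → Prop} {c : γ} (hsurj : ∀ b, ∃ a, P a ∧ π a = b)
    (h : ∀ a, P a → (f (π a) = c ↔ Q a)) :
    π '' {a | P a ∧ Q a} = f ⁻¹' {c} := by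
  ext b
  constructor
  · rintro ⟨a, ⟨hP, hQ⟩, rfl⟩
    exact (h a hP).2 hQ
  · intro hb
    obtain ⟨a, hP, rfl⟩ := hsurj b
    exact ⟨a, ⟨hP, (h a hP).1 hb⟩, rfl⟩

theorem exists_norm_eq_one_apply_eq {𝕜 F X : Type*} [RCLike 𝕜] [NormedAddCommGroup F]
    [NormedSpace 𝕜 F] {π : F → X} (hsurj : ∀ p, ∃ z, z ≠ 0 ∧ π z = p)
    (hinv : ∀ z, z ≠ 0 → ∀ c : 𝕜, c ≠ 0 → π (c • z) = π z) (p : X) :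
    ∃ z, ‖z‖ = 1 ∧ π z = p := by
  obtain ⟨z, hz, rfl⟩ := hsurj p
  exact ⟨(‖z‖⁻¹ : 𝕜) • z, norm_smul_inv_norm hz, hinv z hz _ (by simpa using hz)⟩

section Chain

variable {N : Type*} [TopologicalSpace N] [ChartedSpace EV N]

theorem mdiff_comp_of_differentiableAt {f : N → ℝ} {h : ℝ → ℝ} {x : N}
    (hh : DifferentiableAt ℝ h (f x)) (hf : MDifferentiableAt 𝓘(ℝ, EV) 𝓘(ℝ, ℝ) f x) (w : EV) :
    mdiff (h ∘ f) x w = deriv h (f x) * mdiff f x w := by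
  rw [mdiff, mfderiv_comp x hh.mdifferentiableAt hf, mfderiv_eq_fderiv,
    hh.hasDerivAt.hasFDerivAt.fderiv]
  exact mul_comm _ _

theorem mdiff_mul_mdiff_comm_of_eq_comp {G f : N → ℝ} {h : ℝ → ℝ} {x : N}
    (hG : ∀ y, G y = h (f y)) (hh : DifferentiableAt ℝ h (f x))
    (hf : MDifferentiableAt 𝓘(ℝ, EV) 𝓘(ℝ, ℝ) f x) (a b : EV) :
    mdiff G x a * mdiff f x b = mdiff G x b * mdiff f x a := by
  rw [show G = h ∘ f from funext hG, mdiff_comp_of_differentiableAt hh hf,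
    mdiff_comp_of_differentiableAt hh hf]
  ring

theorem mdiff_apply_mfderiv_eq {F : Type*} [NormedAddCommGroup F] [NormedSpace ℝ F]
    {π : F → N} {f : N → ℝ} {f' : F → ℝ} {φ : F →L[ℝ] ℝ} {z : F}
    (hπ : MDifferentiableAt 𝓘(ℝ, F) 𝓘(ℝ, EV) π z)
    (hf : MDifferentiableAt 𝓘(ℝ, EV) 𝓘(ℝ, ℝ) f (π z))
    (hfπ : f ∘ π =ᶠ[nhds z] f') (hφ : HasFDerivAt f' φ z) (w : F) :
    -- without `EV := EV`, the model of `mdiff` would be read off as `TangentSpace 𝓘(ℝ, EV) (π z)`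
    mdiff (EV := EV) f (π z) (mfderiv 𝓘(ℝ, F) 𝓘(ℝ, EV) π z w) = φ w := by
  have hd : mfderiv 𝓘(ℝ, F) 𝓘(ℝ, ℝ) (f ∘ π) z = φ := by
    rw [hfπ.mfderiv_eq, mfderiv_eq_fderiv, hφ.fderiv]
  rw [← hd, mfderiv_comp z hf hπ]
  rfl

end Chain

namespace RiemannData

variable (D : RiemannData EV M)

theorem g_self_eq_zero_iff {x : M} {a : EV} : D.g x a a = 0 ↔ a = 0 :=
  ⟨fun h => by_contra fun ha => (D.g_posdef x a ha).ne' h, fun h => by simp [h]⟩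

theorem grad_eq_of_forall_g_eq {f : M → ℝ} (hf : ContMDiff 𝓘(ℝ, EV) 𝓘(ℝ, ℝ) (⊤ : ℕ∞) f)
    {x : M} {u : EV} (h : ∀ w, D.g x u w = mdiff f x w) : D.grad f x = u := by
  rw [← sub_eq_zero, ← D.g_self_eq_zero_iff (x := x)]
  simp [D.grad_spec f hf, h]

variable {F : Type*} [NormedAddCommGroup F] [InnerProductSpace ℂ F]

theorem grad_eq_of_horizontal_lift {f : M → ℝ} (hf : ContMDiff 𝓘(ℝ, EV) 𝓘(ℝ, ℝ) (⊤ : ℕ∞) f)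
    {x : M} {z v : F} {L : F → EV} (hL : ∀ u, ∃ w, inner ℂ z w = 0 ∧ L w = u)
    (hg : ∀ w w', inner ℂ z w = 0 → inner ℂ z w' = 0 → D.g x (L w) (L w') = (inner ℂ w w').re)
    (hv : inner ℂ z v = 0) (hdf : ∀ w, inner ℂ z w = 0 → mdiff f x (L w) = (inner ℂ v w).re) :
    D.grad f x = L v := by
  refine D.grad_eq_of_forall_g_eq hf fun u => ?_
  obtain ⟨w, hw, rfl⟩ := hL u
  rw [hg v w hv hw, hdf w hw]

theorem g_grad_eq_norm_rayleighGradient_sq [NormedSpace ℝ F] [IsScalarTower ℝ ℂ F]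
    [FiniteDimensional ℂ F] [FiniteDimensional ℝ EV]
    (hdim : Module.finrank ℝ EV + 2 = 2 * Module.finrank ℂ F)
    {π : F → M} {z : F} (hz : ‖z‖ = 1) (hπ : MDifferentiableAt 𝓘(ℝ, F) 𝓘(ℝ, EV) π z)
    (hg : ∀ w w', inner ℂ z w = 0 → inner ℂ z w' = 0 →
      D.g (π z) (mfderiv 𝓘(ℝ, F) 𝓘(ℝ, EV) π z w) (mfderiv 𝓘(ℝ, F) 𝓘(ℝ, EV) π z w')
        = (inner ℂ w w').re)
    {T : F →L[ℂ] F} (hT : (T : F →ₗ[ℂ] F).IsSymmetric)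
    {f : M → ℝ} (hf : ContMDiff 𝓘(ℝ, EV) 𝓘(ℝ, ℝ) (⊤ : ℕ∞) f)
    (hfπ : f ∘ π =ᶠ[nhds z] T.rayleighQuotient) :
    D.g (π z) (D.grad f (π z)) (D.grad f (π z)) = ‖T.rayleighGradient z‖ ^ 2 := by
  have hz0 : z ≠ 0 := ne_zero_of_norm_ne_zero (by rw [hz]; exact one_ne_zero)
  let L : F →L[ℝ] EV := mfderiv 𝓘(ℝ, F) 𝓘(ℝ, EV) π z
  have hgL : ∀ w w', inner ℂ z w = 0 → inner ℂ z w' = 0 →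
      D.g (π z) (L w) (L w') = (inner ℂ w w').re := hg
  have hinj (w : F) (hw : inner ℂ z w = 0) (hLw : L.toLinearMap w = 0) : w = 0 := by
    have hww := hgL w w hw hw
    rw [ContinuousLinearMap.coe_coe] at hLw
    rw [hLw, map_zero] at hww
    exact re_inner_self_nonpos (𝕜 := ℂ) |>.mp hww.ge
  have hL : ∀ u, ∃ w, inner ℂ z w = 0 ∧ L w = u :=
    exists_inner_eq_zero_apply_eq hz0 L.toLinearMap hinj hdim
  have hv := ContinuousLinearMap.inner_rayleighGradient_eq_zero hT hz
  have hdf (w : F) (_ : inner ℂ z w = 0) :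
      mdiff f (π z) (L w) = (inner ℂ (T.rayleighGradient z) w).re :=
    mdiff_apply_mfderiv_eq hπ ((hf _).mdifferentiableAt (by simp)) hfπ
      (ContinuousLinearMap.hasFDerivAt_rayleighQuotient hT hz) w
  rw [D.grad_eq_of_horizontal_lift hf hL hgL hv hdf, hgL _ _ hv hv,
    ← inner_self_eq_norm_sq (𝕜 := ℂ)]
  rfl

end RiemannData

open scoped ComplexOrder in
theorem stmt10_general (k l m : ℕ) (hm : m = k + l + 1)
    (hdim : Module.finrank ℝ EV = 2 * m)
    (D : RiemannData EV M)
    (π : EuclideanSpace ℂ (Fin (k+1) ⊕ Fin (l+1)) → M)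
    (hπsurj : ∀ p : M, ∃ z, z ≠ 0 ∧ π z = p)
    (hπfib : ∀ z z' : EuclideanSpace ℂ (Fin (k+1) ⊕ Fin (l+1)), z ≠ 0 → z' ≠ 0 →
      (π z = π z' ↔ ∃ c : ℂ, c ≠ 0 ∧ z' = c • z))
    (hπsmooth : ContMDiffOn 𝓘(ℝ, EuclideanSpace ℂ (Fin (k+1) ⊕ Fin (l+1)))
      𝓘(ℝ, EV) (⊤ : ℕ∞) π {z | z ≠ 0})
    (hFS : ∀ z : EuclideanSpace ℂ (Fin (k+1) ⊕ Fin (l+1)), ‖z‖ = 1 →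
      ∀ w w' : EuclideanSpace ℂ (Fin (k+1) ⊕ Fin (l+1)),
        (inner ℂ z w : ℂ) = 0 → (inner ℂ z w' : ℂ) = 0 →
        D.g (π z)
            (mfderiv 𝓘(ℝ, EuclideanSpace ℂ (Fin (k+1) ⊕ Fin (l+1))) 𝓘(ℝ, EV) π z w)
            (mfderiv 𝓘(ℝ, EuclideanSpace ℂ (Fin (k+1) ⊕ Fin (l+1))) 𝓘(ℝ, EV) π z w')
          = (inner ℂ w w' : ℂ).re)
    (τ : M → ℝ) (hτ : ContMDiff 𝓘(ℝ, EV) 𝓘(ℝ, ℝ) (⊤ : ℕ∞) τ)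
    (hτdef : ∀ z : EuclideanSpace ℂ (Fin (k+1) ⊕ Fin (l+1)), z ≠ 0 →
      τ (π z) = (∑ j : Fin (l+1), ‖z (Sum.inr j)‖^2)
        / ((∑ i : Fin (k+1), ‖z (Sum.inl i)‖^2)
            + ∑ j : Fin (l+1), ‖z (Sum.inr j)‖^2)) :
    (∀ x : M, D.g x (D.grad τ x) (D.grad τ x) = 4 * (1 - τ x) * τ x) ∧
    (∀ (x : M) (a b : EV),
      mdiff (fun y => D.g y (D.grad τ y) (D.grad τ y)) x a * mdiff τ x b
        = mdiff (fun y => D.g y (D.grad τ y) (D.grad τ y)) x b * mdiff τ x a) ∧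
    {x : M | D.grad τ x = 0}
      = π '' {z | z ≠ 0 ∧ ∀ j : Fin (l+1), z (Sum.inr j) = 0}
        ∪ π '' {z | z ≠ 0 ∧ ∀ i : Fin (k+1), z (Sum.inl i) = 0} ∧
    Disjoint (π '' {z | z ≠ 0 ∧ ∀ j : Fin (l+1), z (Sum.inr j) = 0})
      (π '' {z | z ≠ 0 ∧ ∀ i : Fin (k+1), z (Sum.inl i) = 0}) := by
  have : FiniteDimensional ℝ EV := .of_finrank_pos (by omega)
  set K := inlVanishing ℂ (Fin (k+1)) (Fin (l+1))
  have hτ_rayleigh (z) (hz : z ≠ 0) : τ (π z) = K.starProjection.rayleighQuotient z :=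
    (hτdef z hz).trans (rayleighQuotient_starProjection_inlVanishing z).symm
  have hgrad (x : M) : D.g x (D.grad τ x) (D.grad τ x) = 4 * (1 - τ x) * τ x := by
    obtain ⟨z, hz, rfl⟩ := exists_norm_eq_one_apply_eq hπsurj
      (fun z hz c hc => ((hπfib z _ hz (smul_ne_zero hc hz)).2 ⟨c, hc, rfl⟩).symm) x
    have hz0 : z ≠ 0 := ne_zero_of_norm_ne_zero (by rw [hz]; exact one_ne_zero)
    rw [D.g_grad_eq_norm_rayleighGradient_sq (by simp [hdim, hm]; ring) hz
      ((hπsmooth.contMDiffAt (isOpen_ne.mem_nhds hz0)).mdifferentiableAt (by simp))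
      (hFS z hz) K.starProjection_isSymmetric hτ
      (Filter.eventually_of_mem (isOpen_ne.mem_nhds hz0) hτ_rayleigh),
      K.norm_rayleighGradient_starProjection_sq hz, hτ_rayleigh z hz0]
  have hzero : π '' {z | z ≠ 0 ∧ ∀ j : Fin (l+1), z (Sum.inr j) = 0} = τ ⁻¹' {0} :=
    image_setOf_and_eq_preimage_singleton hπsurj fun z hz => by
      rw [hτ_rayleigh z hz, K.rayleighQuotient_starProjection_eq_zero_iff,
        starProjection_inlVanishing_eq_zero_iff]
  have hone : π '' {z | z ≠ 0 ∧ ∀ i : Fin (k+1), z (Sum.inl i) = 0} = τ ⁻¹' {1} :=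
    image_setOf_and_eq_preimage_singleton hπsurj fun z hz => by
      rw [hτ_rayleigh z hz, K.rayleighQuotient_starProjection_eq_one_iff hz]
      rfl
  rw [hzero, hone]
  refine ⟨hgrad, fun x => mdiff_mul_mdiff_comm_of_eq_comp (h := fun t => 4 * (1 - t) * t)
    hgrad (by fun_prop) ((hτ x).mdifferentiableAt (by simp)), ?_,
    (Set.disjoint_singleton.2 zero_ne_one).preimage τ⟩
  ext x
  show D.grad τ x = 0 ↔ τ x = 0 ∨ τ x = 1
  rw [← D.g_self_eq_zero_iff, hgrad, mul_eq_zero, mul_eq_zero, sub_eq_zero]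
  norm_num [eq_comm (a := (1 : ℝ)), or_comm]

open scoped ComplexOrder in
/-- On `ℂP^m` (`m = k+l+1 ≥ 2`) with the Fubini–Study metric
(realized via the Riemannian submersion `π` from the unit sphere of
`ℂ^{k+1} × ℂ^{l+1}`), the function `τ([x,y]) = |y|²/(|x|²+|y|²)` satisfies
`g(grad τ, grad τ) = 4(1−τ)τ`; in particular `τ` has geodesic gradient, and its
critical set is the disjoint union of the images of `{y = 0}` and `{x = 0}`,
i.e. of the linear subvarieties `ℂP^k` and `ℂP^l`. -/
theorem stmt10 (k l m : ℕ) (hm : m = k + l + 1) (hm2 : 2 ≤ m)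
    (hdim : Module.finrank ℝ EV = 2 * m)
    (D : RiemannData EV M)
    (π : EuclideanSpace ℂ (Fin (k+1) ⊕ Fin (l+1)) → M)
    (hπsurj : ∀ p : M, ∃ z, z ≠ 0 ∧ π z = p)
    (hπfib : ∀ z z' : EuclideanSpace ℂ (Fin (k+1) ⊕ Fin (l+1)), z ≠ 0 → z' ≠ 0 →
      (π z = π z' ↔ ∃ c : ℂ, c ≠ 0 ∧ z' = c • z))
    (hπsmooth : ContMDiffOn 𝓘(ℝ, EuclideanSpace ℂ (Fin (k+1) ⊕ Fin (l+1)))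
      𝓘(ℝ, EV) (⊤ : ℕ∞) π {z | z ≠ 0})
    (hFS : ∀ z : EuclideanSpace ℂ (Fin (k+1) ⊕ Fin (l+1)), ‖z‖ = 1 →
      ∀ w w' : EuclideanSpace ℂ (Fin (k+1) ⊕ Fin (l+1)),
        (inner ℂ z w : ℂ) = 0 → (inner ℂ z w' : ℂ) = 0 →
        D.g (π z)
            (mfderiv 𝓘(ℝ, EuclideanSpace ℂ (Fin (k+1) ⊕ Fin (l+1))) 𝓘(ℝ, EV) π z w)
            (mfderiv 𝓘(ℝ, EuclideanSpace ℂ (Fin (k+1) ⊕ Fin (l+1))) 𝓘(ℝ, EV) π z w')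
          = (inner ℂ w w' : ℂ).re)
    (τ : M → ℝ) (hτ : ContMDiff 𝓘(ℝ, EV) 𝓘(ℝ, ℝ) (⊤ : ℕ∞) τ)
    (hτdef : ∀ z : EuclideanSpace ℂ (Fin (k+1) ⊕ Fin (l+1)), z ≠ 0 →
      τ (π z) = (∑ j : Fin (l+1), ‖z (Sum.inr j)‖^2)
        / ((∑ i : Fin (k+1), ‖z (Sum.inl i)‖^2)
            + ∑ j : Fin (l+1), ‖z (Sum.inr j)‖^2)) :
    (∀ x : M, D.g x (D.grad τ x) (D.grad τ x) = 4 * (1 - τ x) * τ x) ∧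
    (∀ (x : M) (a b : EV),
      mdiff (fun y => D.g y (D.grad τ y) (D.grad τ y)) x a * mdiff τ x b
        = mdiff (fun y => D.g y (D.grad τ y) (D.grad τ y)) x b * mdiff τ x a) ∧
    {x : M | D.grad τ x = 0}
      = π '' {z | z ≠ 0 ∧ ∀ j : Fin (l+1), z (Sum.inr j) = 0}
        ∪ π '' {z | z ≠ 0 ∧ ∀ i : Fin (k+1), z (Sum.inl i) = 0} ∧
    Disjoint (π '' {z | z ≠ 0 ∧ ∀ j : Fin (l+1), z (Sum.inr j) = 0})
      (π '' {z | z ≠ 0 ∧ ∀ i : Fin (k+1), z (Sum.inl i) = 0}) :=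
  stmt10_general k l m hm hdim D π hπsurj hπfib hπsmooth hFS τ hτ hτdef

end
end

section
/- Let τ be a smooth function with geodesic gradient on a Riemannian manifold (M,g), and let t ↦ x(t) be a nonconstant integral curve of v = grad τ whose τ-image is the interval (b,c). Then τ is strictly increasing along the curve, can be used as a parameter, and the length of the curve equals ∫_b^c Q^{-1/2} dτ, where Q = Q(τ) is the value of g(v,v) expressed as a function of τ along the curve. -/
/-! Along an integral curve of `grad τ` the chain rule gives `(τ ∘ x)' = dτ(grad τ) = Q(τ ∘ x) > 0`,
so `τ ∘ x` is strictly increasing, and the substitution `r = τ(x t)`, `dr = Q dt`, turns the length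
`∫ √Q dt` into `∫ Q⁻¹ᐟ² dr`. -/

open Manifold
noncomputable section

variable {EV : Type*} [NormedAddCommGroup EV] [NormedSpace ℝ EV]
  {M : Type*} [TopologicalSpace M] [ChartedSpace EV M]
  [IsManifold 𝓘(ℝ, EV) (⊤ : ℕ∞) M]

/-- The velocity vector of a curve in `M` (tangent spaces being canonically
identified with the model space `EV`). -/
def mvel (c : ℝ → M) (t : ℝ) : EV :=
  mfderiv 𝓘(ℝ, ℝ) 𝓘(ℝ, EV) c t ((1:ℝ) : TangentSpace 𝓘(ℝ, ℝ) t)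

theorem hasDerivAt_comp_mvel {E : Type*} [NormedAddCommGroup E] [NormedSpace ℝ E]
    {N : Type*} [TopologicalSpace N] [ChartedSpace E N] {f : N → ℝ} {x : ℝ → N} {t : ℝ}
    (hf : MDifferentiableAt 𝓘(ℝ, E) 𝓘(ℝ, ℝ) f (x t))
    (hx : MDifferentiableAt 𝓘(ℝ, ℝ) 𝓘(ℝ, E) x t) :
    HasDerivAt (fun s => f (x s)) (mdiff f (x t) (mvel x t : E)) t := by
  have hdiff : DifferentiableAt ℝ (f ∘ x) t :=
    mdifferentiableAt_iff_differentiableAt.mp (hf.comp t hx)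
  have hderiv : deriv (f ∘ x) t = mdiff f (x t) (mvel x t : E) := by
    rw [deriv, ← mfderiv_eq_fderiv, mfderiv_comp t hf hx]
    rfl
  exact hderiv ▸ hdiff.hasDerivAt

theorem RiemannData.mdiff_grad_self (D : RiemannData EV M) {f : M → ℝ}
    (hf : ContMDiff 𝓘(ℝ, EV) 𝓘(ℝ, ℝ) (⊤ : ℕ∞) f) (y : M) :
    mdiff f y (D.grad f y) = D.g y (D.grad f y) (D.grad f y) :=
  (D.grad_spec f hf y _).symm

open MeasureTheory in
theorem setIntegral_sqrt_comp_eq_setIntegral_inv_sqrt_image {φ q : ℝ → ℝ} {s : Set ℝ}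
    (hs : MeasurableSet s) (hφ : ∀ t ∈ s, HasDerivWithinAt φ (q (φ t)) s t)
    (hinj : Set.InjOn φ s) (hq : ∀ t ∈ s, 0 ≤ q (φ t)) :
    ∫ t in s, √(q (φ t)) = ∫ r in φ '' s, (√(q r))⁻¹ := by
  rw [integral_image_eq_integral_abs_deriv_smul hs hφ hinj]
  refine setIntegral_congr_fun hs fun t ht => ?_
  rw [smul_eq_mul, abs_of_nonneg (hq t ht), ← div_eq_mul_inv, Real.div_sqrt]

open MeasureTheory in
theorem stmt12_general (D : RiemannData EV M) (τ : M → ℝ)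
    (hτ : ContMDiff 𝓘(ℝ, EV) 𝓘(ℝ, ℝ) (⊤ : ℕ∞) τ)
    (t₀ t₁ : ℝ) (x : ℝ → M)
    (hsmooth : ContMDiffOn 𝓘(ℝ, ℝ) 𝓘(ℝ, EV) (⊤ : ℕ∞) x (Set.Ioo t₀ t₁))
    (hintegral : ∀ t ∈ Set.Ioo t₀ t₁, mvel x t = D.grad τ (x t))
    (hnonzero : ∀ t ∈ Set.Ioo t₀ t₁, D.grad τ (x t) ≠ 0)
    (b c : ℝ)
    (himage : (fun t => τ (x t)) '' Set.Ioo t₀ t₁ = Set.Ioo b c)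
    (Qf : ℝ → ℝ)
    (hQf : ∀ t ∈ Set.Ioo t₀ t₁,
      D.g (x t) (D.grad τ (x t)) (D.grad τ (x t)) = Qf (τ (x t))) :
    StrictMonoOn (fun t => τ (x t)) (Set.Ioo t₀ t₁) ∧
    (∫ t in Set.Ioo t₀ t₁,
        Real.sqrt (D.g (x t) (mvel x t) (mvel x t)))
      = ∫ r in Set.Ioo b c, (Real.sqrt (Qf r))⁻¹ := by
  set φ : ℝ → ℝ := fun t => τ (x t)
  have hderiv : ∀ t ∈ Set.Ioo t₀ t₁, HasDerivAt φ (Qf (φ t)) t := fun t ht => by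
    have hx : MDifferentiableAt 𝓘(ℝ, ℝ) 𝓘(ℝ, EV) x t :=
      ((hsmooth t ht).contMDiffAt (Ioo_mem_nhds ht.1 ht.2)).mdifferentiableAt (by simp)
    have hchain := hasDerivAt_comp_mvel (hτ.mdifferentiableAt (by simp)) hx
    rwa [hintegral t ht, D.mdiff_grad_self hτ, hQf t ht] at hchain
  have hpos : ∀ t ∈ Set.Ioo t₀ t₁, 0 < Qf (φ t) := fun t ht =>
    hQf t ht ▸ D.g_posdef _ _ (hnonzero t ht)
  have hmono : StrictMonoOn φ (Set.Ioo t₀ t₁) :=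
    strictMonoOn_of_hasDerivWithinAt_pos (convex_Ioo _ _)
      (fun t ht => (hderiv t ht).continuousAt.continuousWithinAt)
      (fun t ht => (hderiv t (interior_subset ht)).hasDerivWithinAt)
      (fun t ht => hpos t (interior_subset ht))
  refine ⟨hmono, ?_⟩
  have hspeed : ∀ t ∈ Set.Ioo t₀ t₁, D.g (x t) (mvel x t) (mvel x t) = Qf (φ t) :=
    fun t ht => hintegral t ht ▸ hQf t ht
  rw [setIntegral_congr_fun measurableSet_Ioo fun t ht => congrArg Real.sqrt (hspeed t ht),
    ← himage]
  exact setIntegral_sqrt_comp_eq_setIntegral_inv_sqrt_image measurableSet_Ioo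
    (fun t ht => (hderiv t ht).hasDerivWithinAt) hmono.injOn (fun t ht => (hpos t ht).le)

open MeasureTheory in
/-- Along a nonconstant integral curve `x` of `v = grad τ` (for a
smooth function `τ` with geodesic gradient) whose `τ`-image is `(b,c)`, the
function `τ` is strictly increasing (so it may serve as a parameter), and the
length of the curve equals `∫_b^c Q^{-1/2} dτ`, where `Q` is `g(v,v)` expressed
as a function of `τ` along the curve. -/
theorem stmt12 (D : RiemannData EV M) (τ : M → ℝ)
    (hτ : ContMDiff 𝓘(ℝ, EV) 𝓘(ℝ, ℝ) (⊤ : ℕ∞) τ)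
    (hgeo : ∀ (x : M) (a b : EV),
      mdiff (fun y => D.g y (D.grad τ y) (D.grad τ y)) x a * mdiff τ x b
        = mdiff (fun y => D.g y (D.grad τ y) (D.grad τ y)) x b * mdiff τ x a)
    (t₀ t₁ : ℝ) (ht : t₀ < t₁) (x : ℝ → M)
    (hsmooth : ContMDiffOn 𝓘(ℝ, ℝ) 𝓘(ℝ, EV) (⊤ : ℕ∞) x (Set.Ioo t₀ t₁))
    (hintegral : ∀ t ∈ Set.Ioo t₀ t₁, mvel x t = D.grad τ (x t))
    (hnonzero : ∀ t ∈ Set.Ioo t₀ t₁, D.grad τ (x t) ≠ 0)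
    (b c : ℝ)
    (himage : (fun t => τ (x t)) '' Set.Ioo t₀ t₁ = Set.Ioo b c)
    (Qf : ℝ → ℝ)
    (hQf : ∀ t ∈ Set.Ioo t₀ t₁,
      D.g (x t) (D.grad τ (x t)) (D.grad τ (x t)) = Qf (τ (x t))) :
    StrictMonoOn (fun t => τ (x t)) (Set.Ioo t₀ t₁) ∧
    (∫ t in Set.Ioo t₀ t₁,
        Real.sqrt (D.g (x t) (mvel x t) (mvel x t)))
      = ∫ r in Set.Ioo b c, (Real.sqrt (Qf r))⁻¹ :=
  stmt12_general D τ hτ t₀ t₁ x hsmooth hintegral hnonzero b c himage Qf hQf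

end
end

section
/- Let Q : [τ_min, τ_max] → ℝ be smooth, vanishing at the endpoints, positive on the open interval, with dQ/dτ = 2a at τ_min and dQ/dτ = −2a at τ_max for some a > 0. Then the function s(τ) = ∫_{τ_min}^{τ} Q^{-1/2} dτ' is well defined and finite for all τ ∈ [τ_min, τ_max], and τ ↦ s(τ) is a homeomorphism of [τ_min, τ_max] onto [0, λ] (λ = s(τ_max)) restricting to a diffeomorphism of the open intervals. -/
open MeasureTheory
open Filter
open scoped ENNReal NNReal

/-- Let `Q` be smooth on `[τmin, τmax]`, vanishing at the endpoints,
positive on the interior, with one-sided derivatives `2a` at `τmin` and `-2a` at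
`τmax` for some `a > 0`.  Then `s(τ) = ∫_{τmin}^{τ} Q^{-1/2}` is finite for every
`τ ∈ [τmin, τmax]`, and `τ ↦ s(τ)` is a homeomorphism of `[τmin, τmax]` onto
`[0, λ]` (with `λ = s(τmax)`) restricting to a diffeomorphism of the open
intervals. -/
theorem stmt19 (τmin τmax a : ℝ) (hlt : τmin < τmax) (ha : 0 < a)
    (Q : ℝ → ℝ) (hQsmooth : ContDiffOn ℝ (⊤ : ℕ∞) Q (Set.Icc τmin τmax))
    (hQmin : Q τmin = 0) (hQmax : Q τmax = 0)
    (hQpos : ∀ τ ∈ Set.Ioo τmin τmax, 0 < Q τ)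
    (hdmin : derivWithin Q (Set.Icc τmin τmax) τmin = 2 * a)
    (hdmax : derivWithin Q (Set.Icc τmin τmax) τmax = -(2 * a)) :
    IntegrableOn (fun t => (Real.sqrt (Q t))⁻¹) (Set.Ioo τmin τmax) volume ∧
    ∀ s : ℝ → ℝ, (s = fun τ => ∫ t in Set.Ioo τmin τ, (Real.sqrt (Q t))⁻¹) →
      (∃ H : (Set.Icc τmin τmax) ≃ₜ (Set.Icc (0 : ℝ) (s τmax)),
          ∀ x : Set.Icc τmin τmax, (H x : ℝ) = s (x : ℝ)) ∧
      StrictMonoOn s (Set.Icc τmin τmax) ∧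
      s '' Set.Ioo τmin τmax = Set.Ioo 0 (s τmax) ∧
      ContDiffOn ℝ (⊤ : ℕ∞) s (Set.Ioo τmin τmax) ∧
      ∀ τ ∈ Set.Ioo τmin τmax, deriv s τ ≠ 0 := by
  have hQcont : ContinuousOn Q (Set.Icc τmin τmax) := hQsmooth.continuousOn
  set f : ℝ → ℝ := fun t => (Real.sqrt (Q t))⁻¹ with hf_def
  have hfcont : ContinuousOn f (Set.Ioo τmin τmax) := by
    apply ContinuousOn.inv₀
    · exact Real.continuous_sqrt.comp_continuousOn (hQcont.mono Set.Ioo_subset_Icc_self)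
    · exact fun x hx => (Real.sqrt_pos.mpr (hQpos x hx)).ne'
  have hfpos : ∀ x ∈ Set.Ioo τmin τmax, 0 < f x :=
    fun x hx => inv_pos.mpr (Real.sqrt_pos.mpr (hQpos x hx))
  -- lower bounds for Q near the two endpoints
  obtain ⟨u, hu1, hu2, hQlbu⟩ : ∃ u, τmin < u ∧ u ≤ τmax ∧
      ∀ τ ∈ Set.Ioo τmin u, a * (τ - τmin) ≤ Q τ := by
    have hd1 : HasDerivWithinAt Q (2*a) (Set.Icc τmin τmax) τmin := by
      have hdiff := (hQsmooth.differentiableOn (by simp)) τmin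
        (Set.left_mem_Icc.mpr hlt.le)
      have := hdiff.hasDerivWithinAt
      rwa [hdmin] at this
    have hslope := hasDerivWithinAt_iff_tendsto_slope.mp hd1
    have hsub : Set.Ioo τmin τmax ⊆ Set.Icc τmin τmax \ {τmin} :=
      fun t ht => ⟨Set.Ioo_subset_Icc_self ht, by simp [ht.1.ne']⟩
    have hslope' : Filter.Tendsto (slope Q τmin) (nhdsWithin τmin (Set.Ioi τmin)) (nhds (2*a)) := by
      rw [← nhdsWithin_Ioo_eq_nhdsGT hlt]
      exact hslope.mono_left (nhdsWithin_mono _ hsub)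
    have h1 : ∀ᶠ τ in nhdsWithin τmin (Set.Ioi τmin), a < slope Q τmin τ :=
      hslope'.eventually (eventually_gt_nhds (by linarith))
    have h2 : ∀ᶠ τ in nhdsWithin τmin (Set.Ioi τmin), τ ∈ Set.Ioo τmin τmax :=
      Ioo_mem_nhdsGT hlt
    obtain ⟨u, hu, huset⟩ := (mem_nhdsGT_iff_exists_Ioo_subset).mp (h1.and h2)
    refine ⟨min u τmax, lt_min hu (by linarith), min_le_right _ _, ?_⟩
    intro τ hτ
    have hτ' : τ ∈ Set.Ioo τmin u := ⟨hτ.1, lt_of_lt_of_le hτ.2 (min_le_left _ _)⟩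
    obtain ⟨hsl, _⟩ := huset hτ'
    rw [slope_def_field, hQmin, sub_zero] at hsl
    have hpos : 0 < τ - τmin := by linarith [hτ.1]
    have := (lt_div_iff₀ hpos).mp hsl
    linarith
  obtain ⟨v, hv1, hv2, hQlbv⟩ : ∃ v, v < τmax ∧ τmin ≤ v ∧
      ∀ τ ∈ Set.Ioo v τmax, a * (τmax - τ) ≤ Q τ := by
    have hd1 : HasDerivWithinAt Q (-(2*a)) (Set.Icc τmin τmax) τmax := by
      have hdiff := (hQsmooth.differentiableOn (by simp)) τmax
        (Set.right_mem_Icc.mpr hlt.le)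
      have := hdiff.hasDerivWithinAt
      rwa [hdmax] at this
    have hslope := hasDerivWithinAt_iff_tendsto_slope.mp hd1
    have hsub : Set.Ioo τmin τmax ⊆ Set.Icc τmin τmax \ {τmax} :=
      fun t ht => ⟨Set.Ioo_subset_Icc_self ht, by simp [ht.2.ne]⟩
    have hslope' : Filter.Tendsto (slope Q τmax) (nhdsWithin τmax (Set.Iio τmax)) (nhds (-(2*a))) := by
      rw [← nhdsWithin_Ioo_eq_nhdsLT hlt]
      exact hslope.mono_left (nhdsWithin_mono _ hsub)
    have h1 : ∀ᶠ τ in nhdsWithin τmax (Set.Iio τmax), slope Q τmax τ < -a :=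
      hslope'.eventually (eventually_lt_nhds (by linarith))
    have h2 : ∀ᶠ τ in nhdsWithin τmax (Set.Iio τmax), τ ∈ Set.Ioo τmin τmax :=
      Ioo_mem_nhdsLT hlt
    obtain ⟨v, hv, hvset⟩ := (mem_nhdsLT_iff_exists_Ioo_subset).mp (h1.and h2)
    refine ⟨max v τmin, max_lt hv (by linarith), le_max_right _ _, ?_⟩
    intro τ hτ
    have hτ' : τ ∈ Set.Ioo v τmax := ⟨lt_of_le_of_lt (le_max_left _ _) hτ.1, hτ.2⟩
    obtain ⟨hsl, _⟩ := hvset hτ'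
    rw [slope_def_field, hQmax, sub_zero] at hsl
    have hneg : τ - τmax < 0 := by linarith [hτ.2]
    have := (div_lt_iff_of_neg hneg).mp hsl
    linarith
  -- integrability on the left piece
  have hint1 : IntegrableOn f (Set.Ioo τmin u) volume := by
    have hb : IntervalIntegrable (fun τ => (Real.sqrt a)⁻¹ * (τ - τmin) ^ (-(1/2) : ℝ))
        volume τmin u := by
      have h0 := (intervalIntegral.intervalIntegrable_rpow' (a := 0) (b := u - τmin)
        (r := -(1/2)) (by norm_num)).comp_sub_right τmin
      simpa using h0.const_mul (Real.sqrt a)⁻¹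
    have hbI : IntegrableOn (fun τ => (Real.sqrt a)⁻¹ * (τ - τmin) ^ (-(1/2) : ℝ))
        (Set.Ioo τmin u) volume :=
      (intervalIntegrable_iff_integrableOn_Ioo_of_le hu1.le).mp hb
    apply hbI.mono' (((hfcont.mono (fun t ht => ⟨ht.1, lt_of_lt_of_le ht.2 hu2⟩))).aestronglyMeasurable
      measurableSet_Ioo)
    rw [ae_restrict_iff' measurableSet_Ioo]
    filter_upwards with τ hτ
    have hQb := hQlbu τ hτ
    have hτm : 0 < τ - τmin := by linarith [hτ.1]
    have hpos : 0 < a * (τ - τmin) := by positivity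
    have h2 : (Real.sqrt (Q τ))⁻¹ ≤ (Real.sqrt (a * (τ - τmin)))⁻¹ :=
      inv_anti₀ (Real.sqrt_pos.mpr hpos) (Real.sqrt_le_sqrt hQb)
    have h4 : (Real.sqrt (a * (τ - τmin)))⁻¹
        = (Real.sqrt a)⁻¹ * (τ - τmin) ^ (-(1/2) : ℝ) := by
      rw [Real.sqrt_mul ha.le, mul_inv, Real.sqrt_eq_rpow (τ - τmin),
        ← Real.rpow_neg hτm.le]
    rw [Real.norm_eq_abs, abs_of_pos (hfpos τ ⟨hτ.1, lt_of_lt_of_le hτ.2 hu2⟩), ← h4]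
    exact h2
  have hint2 : IntegrableOn f (Set.Ioo v τmax) volume := by
    have hb : IntervalIntegrable (fun τ => (Real.sqrt a)⁻¹ * (τmax - τ) ^ (-(1/2) : ℝ))
        volume v τmax := by
      have h0 := (intervalIntegral.intervalIntegrable_rpow' (a := 0) (b := τmax - v)
        (r := -(1/2)) (by norm_num)).comp_sub_left τmax
      have h1 : IntervalIntegrable (fun x => (τmax - x) ^ (-(1/2) : ℝ)) volume τmax v := by
        simpa using h0
      simpa using h1.symm.const_mul (Real.sqrt a)⁻¹
    have hbI : IntegrableOn (fun τ => (Real.sqrt a)⁻¹ * (τmax - τ) ^ (-(1/2) : ℝ))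
        (Set.Ioo v τmax) volume :=
      (intervalIntegrable_iff_integrableOn_Ioo_of_le hv1.le).mp hb
    apply hbI.mono' (((hfcont.mono (fun t ht => ⟨lt_of_le_of_lt hv2 ht.1, ht.2⟩))).aestronglyMeasurable
      measurableSet_Ioo)
    rw [ae_restrict_iff' measurableSet_Ioo]
    filter_upwards with τ hτ
    have hQb := hQlbv τ hτ
    have hτm : 0 < τmax - τ := by linarith [hτ.2]
    have hpos : 0 < a * (τmax - τ) := by positivity
    have h2 : (Real.sqrt (Q τ))⁻¹ ≤ (Real.sqrt (a * (τmax - τ)))⁻¹ :=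
      inv_anti₀ (Real.sqrt_pos.mpr hpos) (Real.sqrt_le_sqrt hQb)
    have h4 : (Real.sqrt (a * (τmax - τ)))⁻¹
        = (Real.sqrt a)⁻¹ * (τmax - τ) ^ (-(1/2) : ℝ) := by
      rw [Real.sqrt_mul ha.le, mul_inv, Real.sqrt_eq_rpow (τmax - τ),
        ← Real.rpow_neg hτm.le]
    rw [Real.norm_eq_abs, abs_of_pos (hfpos τ ⟨lt_of_le_of_lt hv2 hτ.1, hτ.2⟩), ← h4]
    exact h2
  have hmid : IntegrableOn f (Set.Icc ((τmin + u)/2) ((v + τmax)/2)) volume := by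
    apply ContinuousOn.integrableOn_Icc
    apply hfcont.mono
    intro x hx
    exact ⟨by linarith [hx.1], by linarith [hx.2]⟩
  have hint : IntegrableOn f (Set.Ioo τmin τmax) volume := by
    apply (((hint1.union hint2).union hmid).mono_set _)
    intro τ hτ
    by_cases h1 : τ < u
    · exact Or.inl (Or.inl ⟨hτ.1, h1⟩)
    by_cases h2 : v < τ
    · exact Or.inl (Or.inr ⟨h2, hτ.2⟩)
    · push_neg at h1 h2
      exact Or.inr ⟨by linarith, by linarith⟩
  refine ⟨hint, ?_⟩
  intro s hs
  subst hs
  set S : ℝ → ℝ := fun τ => ∫ t in Set.Ioo τmin τ, f t with hS_def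
  have hIcc : IntegrableOn f (Set.Icc τmin τmax) volume :=
    (integrableOn_Icc_iff_integrableOn_Ioo).mpr hint
  have hII : ∀ x ∈ Set.Icc τmin τmax, ∀ y ∈ Set.Icc τmin τmax,
      IntervalIntegrable f volume x y := by
    intro x hx y hy
    constructor
    · exact hIcc.mono_set (fun t ht => ⟨le_trans hx.1 ht.1.le, le_trans ht.2 hy.2⟩)
    · exact hIcc.mono_set (fun t ht => ⟨le_trans hy.1 ht.1.le, le_trans ht.2 hx.2⟩)
  have hS_interval : ∀ τ ∈ Set.Icc τmin τmax, S τ = ∫ t in τmin..τ, f t := by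
    intro τ hτ
    rw [intervalIntegral.integral_of_le hτ.1, MeasureTheory.integral_Ioc_eq_integral_Ioo]
  have hS0 : S τmin = 0 := by
    rw [hS_def]; simp
  have hScont : ContinuousOn S (Set.Icc τmin τmax) := by
    have h1 : S = fun τ => ∫ t in Set.Ioc τmin τ, f t :=
      funext fun τ => (MeasureTheory.integral_Ioc_eq_integral_Ioo).symm
    rw [h1]
    exact intervalIntegral.continuousOn_primitive hIcc
  have hmono : StrictMonoOn S (Set.Icc τmin τmax) := by
    intro x hx y hy hxy
    have hadd := intervalIntegral.integral_add_adjacent_intervals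
      (hII τmin (Set.left_mem_Icc.mpr hlt.le) x hx) (hII x hx y hy)
    have hpos : 0 < ∫ t in x..y, f t :=
      intervalIntegral.intervalIntegral_pos_of_pos_on (hII x hx y hy)
        (fun t ht => hfpos t ⟨lt_of_le_of_lt hx.1 ht.1, lt_of_lt_of_le ht.2 hy.2⟩) hxy
    rw [hS_interval x hx, hS_interval y hy, ← hadd]
    linarith
  have hmem : ∀ x : Set.Icc τmin τmax, S x ∈ Set.Icc (0:ℝ) (S τmax) := by
    rintro ⟨x, hx⟩
    constructor
    · rw [← hS0]
      exact hmono.monotoneOn (Set.left_mem_Icc.mpr hlt.le) hx hx.1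
    · exact hmono.monotoneOn hx (Set.right_mem_Icc.mpr hlt.le) hx.2
  refine ⟨?_, hmono, ?_, ?_, ?_⟩
  · -- homeomorphism
    set e : Set.Icc τmin τmax → Set.Icc (0:ℝ) (S τmax) := fun x => ⟨S x, hmem x⟩ with he_def
    have hbij : Function.Bijective e := by
      constructor
      · intro p q hpq
        have : S p = S q := congrArg Subtype.val hpq
        exact Subtype.ext (hmono.injOn p.2 q.2 this)
      · rintro ⟨y, hy⟩
        have hy' : y ∈ S '' Set.Icc τmin τmax := by
          apply intermediate_value_Icc hlt.le hScont
          rwa [hS0]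
        obtain ⟨x, hx, hxy⟩ := hy'
        exact ⟨⟨x, hx⟩, Subtype.ext hxy⟩
    have hecont : Continuous e :=
      Continuous.subtype_mk (hScont.comp_continuous continuous_subtype_val (fun x => x.2)) _
    exact ⟨Continuous.homeoOfEquivCompactToT2 (f := Equiv.ofBijective e hbij) hecont,
      fun x => rfl⟩
  · -- image of the open interval
    apply Set.Subset.antisymm
    · rintro y ⟨x, hx, rfl⟩
      constructor
      · rw [← hS0]
        exact hmono (Set.left_mem_Icc.mpr hlt.le) (Set.Ioo_subset_Icc_self hx) hx.1
      · exact hmono (Set.Ioo_subset_Icc_self hx) (Set.right_mem_Icc.mpr hlt.le) hx.2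
    · have h1 := intermediate_value_Ioo hlt.le hScont
      rwa [hS0] at h1
  all_goals {
    have hSderiv : ∀ τ ∈ Set.Ioo τmin τmax, HasDerivAt S (f τ) τ := by
      intro τ hτ
      have h1 : HasDerivAt (fun z => ∫ t in τmin..z, f t) (f τ) τ := by
        apply intervalIntegral.integral_hasDerivAt_right
          (hII τmin (Set.left_mem_Icc.mpr hlt.le) τ (Set.Ioo_subset_Icc_self hτ))
        · exact ⟨Set.Ioo τmin τmax, isOpen_Ioo.mem_nhds hτ,
            hfcont.aestronglyMeasurable measurableSet_Ioo⟩
        · exact hfcont.continuousAt (isOpen_Ioo.mem_nhds hτ)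
      apply h1.congr_of_eventuallyEq
      filter_upwards [isOpen_Ioo.mem_nhds hτ] with y hy
      exact hS_interval y (Set.Ioo_subset_Icc_self hy)
    first
    | -- smoothness
      (rw [contDiffOn_infty_iff_deriv_of_isOpen isOpen_Ioo]
       refine ⟨fun τ hτ => (hSderiv τ hτ).differentiableAt.differentiableWithinAt, ?_⟩
       have hfs : ContDiffOn ℝ (⊤ : ℕ∞) f (Set.Ioo τmin τmax) :=
         ((hQsmooth.mono Set.Ioo_subset_Icc_self).sqrt (fun x hx => (hQpos x hx).ne')).inv
           (fun x hx => (Real.sqrt_pos.mpr (hQpos x hx)).ne')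
       exact hfs.congr (fun τ hτ => (hSderiv τ hτ).deriv))
    | -- nonvanishing derivative
      (intro τ hτ
       rw [(hSderiv τ hτ).deriv]
       exact (hfpos τ hτ).ne')
  }
end
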